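/- arXiv:1304.5530 — 2 statements merged into one kernel-verified Lean document; each statement's English description precedes it below -/
import Mathlib

section
/- Assume in addition that: (a) f satisfies f(y) ≥ f(x) + ⟨∇f(x), y − x⟩ + (μ_f/2)‖y − x‖_L² for all x, y ∈ E with 0 ≤ μ_f ≤ 1; (b) Ψ satisfies Ψ(λx + (1−λ)y) ≤ λΨ(x) + (1−λ)Ψ(y) − (μ_Ψ λ(1−λ)/2)‖x − y‖_L² for all x, y ∈ E and λ ∈ [0,1], with μ_Ψ ≥ 0; and (c) μ_f + μ_Ψ > 0. Suppose F = f + Ψ attains its minimum value F*. Then for every x ∈ E, every δ = (δ_1,…,δ_n) with δ_i ≥ 0, and every δ-inexact update T at x, with Δ = Σ_{i=1}^n δ_i, one has H(x, T) − F* ≤ Δ + ((1 − μ_f)/(1 + μ_Ψ))·(F(x) − F*). -/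
/-! Compare `T` with the explicit step `S = λ (x* - x)`, `λ = (μ_f + μ_Ψ) / (1 + μ_Ψ)`.
Since `H(x, ·) - f(x)` is the sum of the block models `V_i(x, ·)`, which are bounded below
(`Ψ_i` is convex and continuous, hence has linear growth from below, and `L_i > 0`),
`δ`-inexactness gives `H(x, T) ≤ Δ + H(x, S)`. Strong convexity of `f` from `x` towards `x*` and
of `Ψ` on the segment `[x, x*]` give `H(x, S) ≤ λ F* + (1 - λ) F(x)`: the choice of `λ`,
i.e. `λ = μ_f + μ_Ψ (1 - λ)`, makes the two strong convexity gains absorb the quadratic term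
`λ² ‖x* - x‖_L² / 2` exactly. Finally `1 - λ = (1 - μ_f) / (1 + μ_Ψ)`. -/

open scoped RealInnerProductSpace
open MeasureTheory

noncomputable section

variable {n : ℕ} {E : Fin n → Type*} [∀ i, NormedAddCommGroup (E i)]
  [∀ i, InnerProductSpace ℝ (E i)] [∀ i, FiniteDimensional ℝ (E i)]

/-- `U i t`: embedding of the `i`-th block into the product space `E = E₁ × ⋯ × Eₙ`
(the vector with `i`-th block equal to `t` and all other blocks zero). -/
def blockEmbed (i : Fin n) (t : E i) : PiLp 2 E :=
  (WithLp.equiv 2 (∀ j, E j)).symm (Pi.single i t)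

/-- `V_i(x,t) = ⟨∇_i f(x), t⟩ + (L_i/2)‖t‖² + Ψ_i(x_i + t)`. -/
def Vi (f : PiLp 2 E → ℝ) (L : Fin n → ℝ) (Ψ : ∀ i, E i → ℝ)
    (x : PiLp 2 E) (i : Fin n) (t : E i) : ℝ :=
  ⟪(gradient f x) i, t⟫ + L i / 2 * ‖t‖ ^ 2 + Ψ i (x i + t)

/-- `T` is a `δ`-inexact update at `x`:
`V_i(x, T_i) ≤ min{V_i(x,0), δ_i + inf_t V_i(x,t)}` for every block `i`. -/
def IsInexactUpdate (f : PiLp 2 E → ℝ) (L : Fin n → ℝ) (Ψ : ∀ i, E i → ℝ)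
    (δ : Fin n → ℝ) (x T : PiLp 2 E) : Prop :=
  ∀ i, Vi f L Ψ x i (T i) ≤ min (Vi f L Ψ x i 0) (δ i + ⨅ t : E i, Vi f L Ψ x i t)

/-- `H(x,T) = f(x) + ⟨∇f(x), T⟩ + (1/2)‖T‖_L² + Ψ(x+T)`. -/
def Hfun (f : PiLp 2 E → ℝ) (L : Fin n → ℝ) (Ψ : ∀ i, E i → ℝ) (x T : PiLp 2 E) : ℝ :=
  f x + ⟪gradient f x, T⟫ + (1/2) * ∑ i, L i * ‖T i‖ ^ 2 + ∑ i, Ψ i (x i + T i)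

/-- `F = f + Ψ` where `Ψ(x) = Σ_i Ψ_i(x_i)`. -/
def Ffun (f : PiLp 2 E → ℝ) (Ψ : ∀ i, E i → ℝ) (x : PiLp 2 E) : ℝ :=
  f x + ∑ i, Ψ i (x i)

theorem ConvexOn.exists_neg_mul_one_add_norm_le {G : Type*} [NormedAddCommGroup G]
    [NormedSpace ℝ G] [ProperSpace G] {φ : G → ℝ} (hconv : ConvexOn ℝ Set.univ φ)
    (hcont : Continuous φ) : ∃ C, 0 ≤ C ∧ ∀ s, -(C * (1 + ‖s‖)) ≤ φ s := by
  obtain ⟨C, hC⟩ := (isCompact_closedBall (0 : G) 1).exists_bound_of_continuousOn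
    hcont.continuousOn
  have hball : ∀ u : G, ‖u‖ ≤ 1 → |φ u| ≤ C := fun u hu =>
    hC u (by rwa [mem_closedBall_zero_iff])
  have hC0 : 0 ≤ C := (abs_nonneg _).trans (hball 0 (by simp))
  refine ⟨2 * C, by positivity, fun s => ?_⟩
  rcases le_or_gt ‖s‖ 1 with hs | hs
  · nlinarith [neg_abs_le (φ s), hball s hs, norm_nonneg s]
  · -- convexity on the segment from `0` to `s` through the unit vector `‖s‖⁻¹ • s`
    set r := ‖s‖
    have hr : 0 < r := by linarith
    have hconv_s := hconv.2 (Set.mem_univ s) (Set.mem_univ 0) (inv_nonneg.2 hr.le)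
      (sub_nonneg.2 (inv_le_one_of_one_le₀ hs.le)) (add_sub_cancel _ _)
    rw [smul_zero, add_zero] at hconv_s
    have hunit : |φ (r⁻¹ • s)| ≤ C := hball _ (by
      rw [norm_smul, Real.norm_eq_abs, abs_inv, abs_of_pos hr, inv_mul_cancel₀ hr.ne'])
    have hscaled : r * φ (r⁻¹ • s) ≤ φ s + (r - 1) * φ 0 :=
      calc r * φ (r⁻¹ • s) ≤ r * (r⁻¹ * φ s + (1 - r⁻¹) * φ 0) := by
            gcongr; simpa only [smul_eq_mul] using hconv_s
        _ = φ s + (r - 1) * φ 0 := by field_simp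
    nlinarith [mul_le_mul_of_nonneg_left (neg_abs_le (φ (r⁻¹ • s))) hr.le,
      mul_le_mul_of_nonneg_left (le_abs_self (φ 0)) (by linarith : (0 : ℝ) ≤ r - 1),
      hball 0 (by simp)]

theorem bddBelow_range_inner_add_sq_add {G : Type*} [NormedAddCommGroup G]
    [InnerProductSpace ℝ G] (g a : G) {c C : ℝ} (hc : 0 < c) (hC : 0 ≤ C) {φ : G → ℝ}
    (hφ : ∀ s, -(C * (1 + ‖s‖)) ≤ φ s) :
    BddBelow (Set.range fun t => ⟪g, t⟫ + c / 2 * ‖t‖ ^ 2 + φ (a + t)) := by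
  refine ⟨-((‖g‖ + C) ^ 2 / (2 * c) + C * (1 + ‖a‖)), ?_⟩
  rintro _ ⟨t, rfl⟩
  have hinner : -(‖g‖ * ‖t‖) ≤ ⟪g, t⟫ := neg_le_of_abs_le (abs_real_inner_le_norm g t)
  have hφt : -(C * (1 + (‖a‖ + ‖t‖))) ≤ φ (a + t) :=
    (neg_le_neg (by gcongr; exact norm_add_le a t)).trans (hφ (a + t))
  -- completing the square in `‖t‖`
  have hquad : -((‖g‖ + C) ^ 2 / (2 * c)) ≤ c / 2 * ‖t‖ ^ 2 - (‖g‖ + C) * ‖t‖ := by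
    rw [neg_le, le_div_iff₀ (by positivity)]
    nlinarith [sq_nonneg (c * ‖t‖ - (‖g‖ + C))]
  nlinarith

section

variable (f : PiLp 2 E → ℝ) (L : Fin n → ℝ) (Ψ : ∀ i, E i → ℝ)

theorem Hfun_eq_add_sum_Vi (x S : PiLp 2 E) :
    Hfun f L Ψ x S = f x + ∑ i, Vi f L Ψ x i (S i) := by
  simp only [Hfun, Vi, PiLp.inner_apply, Finset.sum_add_distrib, Finset.mul_sum]
  ring_nf

variable {f L Ψ}

theorem bddBelow_range_Vi (hL : ∀ i, 0 < L i) (hΨconv : ∀ i, ConvexOn ℝ Set.univ (Ψ i))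
    (hΨcont : ∀ i, Continuous (Ψ i)) (x : PiLp 2 E) (i : Fin n) :
    BddBelow (Set.range (Vi f L Ψ x i)) := by
  obtain ⟨C, hC, hlow⟩ := (hΨconv i).exists_neg_mul_one_add_norm_le (hΨcont i)
  exact bddBelow_range_inner_add_sq_add _ _ (hL i) hC hlow

theorem IsInexactUpdate.Hfun_le (hL : ∀ i, 0 < L i)
    (hΨconv : ∀ i, ConvexOn ℝ Set.univ (Ψ i)) (hΨcont : ∀ i, Continuous (Ψ i))
    {δ : Fin n → ℝ} {x T : PiLp 2 E} (hT : IsInexactUpdate f L Ψ δ x T) (S : PiLp 2 E) :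
    Hfun f L Ψ x T ≤ (∑ i, δ i) + Hfun f L Ψ x S := by
  have hblock (i : Fin n) : Vi f L Ψ x i (T i) ≤ δ i + Vi f L Ψ x i (S i) :=
    ((hT i).trans (min_le_right _ _)).trans
      (add_le_add le_rfl (ciInf_le (bddBelow_range_Vi hL hΨconv hΨcont x i) (S i)))
  rw [Hfun_eq_add_sum_Vi, Hfun_eq_add_sum_Vi, add_left_comm, ← Finset.sum_add_distrib]
  exact add_le_add_right (Finset.sum_le_sum fun i _ => hblock i) _

theorem Hfun_smul_sub_le {μf μΨ : ℝ}
    (hscf : ∀ x y : PiLp 2 E,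
      f x + ⟪gradient f x, y - x⟫ + μf / 2 * ∑ i, L i * ‖y i - x i‖ ^ 2 ≤ f y)
    (hscΨ : ∀ x y : PiLp 2 E, ∀ lam ∈ Set.Icc (0:ℝ) 1,
      ∑ i, Ψ i ((lam • x + (1 - lam) • y) i) ≤
        lam * ∑ i, Ψ i (x i) + (1 - lam) * ∑ i, Ψ i (y i)
          - μΨ * lam * (1 - lam) / 2 * ∑ i, L i * ‖x i - y i‖ ^ 2)
    {lam : ℝ} (hlam : lam ∈ Set.Icc (0:ℝ) 1) (hlam_eq : lam = μf + μΨ * (1 - lam))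
    (x z : PiLp 2 E) :
    Hfun f L Ψ x (lam • (z - x)) ≤ lam * Ffun f Ψ z + (1 - lam) * Ffun f Ψ x := by
  set S := ∑ i, L i * ‖z i - x i‖ ^ 2
  have hnorm : ∑ i, L i * ‖(lam • (z - x)) i‖ ^ 2 = lam ^ 2 * S := by
    simp only [S, Finset.mul_sum, PiLp.smul_apply, PiLp.sub_apply, norm_smul,
      Real.norm_eq_abs, mul_pow, sq_abs]
    exact Finset.sum_congr rfl fun i _ => by ring
  have hΨ : ∑ i, Ψ i (x i + (lam • (z - x)) i) = ∑ i, Ψ i ((lam • z + (1 - lam) • x) i) :=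
    Finset.sum_congr rfl fun i _ => by
      congr 1; simp only [PiLp.add_apply, PiLp.smul_apply, PiLp.sub_apply]; module
  have hf := mul_le_mul_of_nonneg_left (hscf x z) hlam.1
  have hΨz := hscΨ z x lam hlam
  simp only [Hfun, Ffun, real_inner_smul_right, hnorm, hΨ]
  linear_combination hf + hΨz + (S * lam / 2) * hlam_eq

end

theorem Hfun_strongly_convex_bound_general
    (L : Fin n → ℝ) (hL : ∀ i, 0 < L i)
    (f : PiLp 2 E → ℝ)
    (Ψ : ∀ i, E i → ℝ) (hΨconv : ∀ i, ConvexOn ℝ Set.univ (Ψ i))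
    (hΨcont : ∀ i, Continuous (Ψ i))
    (μf μΨ : ℝ) (hμf1 : μf ≤ 1) (hμΨ0 : 0 ≤ μΨ) (hμpos : 0 < μf + μΨ)
    (hscf : ∀ x y : PiLp 2 E,
      f x + ⟪gradient f x, y - x⟫ + μf / 2 * ∑ i, L i * ‖y i - x i‖ ^ 2 ≤ f y)
    (hscΨ : ∀ x y : PiLp 2 E, ∀ lam ∈ Set.Icc (0:ℝ) 1,
      ∑ i, Ψ i ((lam • x + (1 - lam) • y) i) ≤
        lam * ∑ i, Ψ i (x i) + (1 - lam) * ∑ i, Ψ i (y i)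
          - μΨ * lam * (1 - lam) / 2 * ∑ i, L i * ‖x i - y i‖ ^ 2)
    (Fstar : ℝ) (xstar : PiLp 2 E) (hstar : Ffun f Ψ xstar = Fstar)
    (x : PiLp 2 E) (δ : Fin n → ℝ)
    (T : PiLp 2 E) (hT : IsInexactUpdate f L Ψ δ x T) :
    Hfun f L Ψ x T - Fstar ≤
      (∑ i, δ i) + (1 - μf) / (1 + μΨ) * (Ffun f Ψ x - Fstar) := by
  have hμ : 0 < 1 + μΨ := by linarith
  set lam := (μf + μΨ) / (1 + μΨ)
  have hlam : lam ∈ Set.Icc (0:ℝ) 1 :=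
    ⟨div_nonneg hμpos.le hμ.le, (div_le_one hμ).2 (by linarith)⟩
  have hlam_eq : lam = μf + μΨ * (1 - lam) := by simp only [lam]; field_simp; ring
  have hcoef : (1 - μf) / (1 + μΨ) = 1 - lam := by simp only [lam]; field_simp; ring
  have hstep := hT.Hfun_le hL hΨconv hΨcont (lam • (xstar - x))
  have hmodel := Hfun_smul_sub_le hscf hscΨ hlam hlam_eq x xstar
  rw [hstar] at hmodel
  rw [hcoef]
  linarith

/-- Lemma 5 of the paper (strongly convex composite case):
`H(x,T) − F* ≤ Δ + ((1 − μ_f)/(1 + μ_Ψ))(F(x) − F*)`. -/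
theorem Hfun_strongly_convex_bound
    (hn : 0 < n)
    (L : Fin n → ℝ) (hL : ∀ i, 0 < L i)
    (f : PiLp 2 E → ℝ) (hfdiff : Differentiable ℝ f) (hfconv : ConvexOn ℝ Set.univ f)
    (hLip : ∀ (x : PiLp 2 E) (i : Fin n) (t : E i),
      ‖(gradient f (x + blockEmbed i t)) i - (gradient f x) i‖ ≤ L i * ‖t‖)
    (Ψ : ∀ i, E i → ℝ) (hΨconv : ∀ i, ConvexOn ℝ Set.univ (Ψ i))
    (hΨcont : ∀ i, Continuous (Ψ i))
    (μf μΨ : ℝ) (hμf0 : 0 ≤ μf) (hμf1 : μf ≤ 1) (hμΨ0 : 0 ≤ μΨ) (hμpos : 0 < μf + μΨ)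
    (hscf : ∀ x y : PiLp 2 E,
      f x + ⟪gradient f x, y - x⟫ + μf / 2 * ∑ i, L i * ‖y i - x i‖ ^ 2 ≤ f y)
    (hscΨ : ∀ x y : PiLp 2 E, ∀ lam ∈ Set.Icc (0:ℝ) 1,
      ∑ i, Ψ i ((lam • x + (1 - lam) • y) i) ≤
        lam * ∑ i, Ψ i (x i) + (1 - lam) * ∑ i, Ψ i (y i)
          - μΨ * lam * (1 - lam) / 2 * ∑ i, L i * ‖x i - y i‖ ^ 2)
    (Fstar : ℝ) (xstar : PiLp 2 E) (hstar : Ffun f Ψ xstar = Fstar)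
    (hmin : ∀ y, Fstar ≤ Ffun f Ψ y)
    (x : PiLp 2 E) (δ : Fin n → ℝ) (hδ : ∀ i, 0 ≤ δ i)
    (T : PiLp 2 E) (hT : IsInexactUpdate f L Ψ δ x T) :
    Hfun f L Ψ x T - Fstar ≤
      (∑ i, δ i) + (1 - μf) / (1 + μΨ) * (Ffun f Ψ x - Fstar) :=
  Hfun_strongly_convex_bound_general L hL f Ψ hΨconv hΨcont μf μΨ hμf1 hμΨ0 hμpos hscf hscΨ Fstar
    xstar hstar x δ T hT
end
end

section
/- Assume: (a) f satisfies f(y) ≥ f(x) + ⟨∇f(x), y − x⟩ + (μ_f/2)‖y − x‖_L² for all x, y ∈ E with 0 ≤ μ_f ≤ 1; (b) Ψ satisfies Ψ(λx + (1−λ)y) ≤ λΨ(x) + (1−λ)Ψ(y) − (μ_Ψ λ(1−λ)/2)‖x − y‖_L² for all x, y and λ ∈ [0,1], with μ_Ψ ≥ 0; (c) μ_f + μ_Ψ > 0, and set μ = (μ_f + μ_Ψ)/(1 + μ_Ψ); (d) F = f + Ψ attains its minimum value F*. Let (Ω, ℙ) be a probability space and (I_k)_{k≥0} an i.i.d. sequence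 of random variables, each uniformly distributed on {1,…,n}. Let α, β ≥ 0 with α < μ/n. For each k, let δ_k : E → ℝ^n be measurable with δ_k(x)_i ≥ 0 and (1/n)Σ_{i=1}^n δ_k(x)_i ≤ α(F(x) − F*) + β for all x ∈ E, and let T_k : E → E be measurable such that for every x, T_k(x) is a δ_k(x)-inexact update at x. Fix x₀ ∈ E and define the random iterates x_{k+1} = x_k + U_{I_k}((T_k(x_k))_{I_k}). Let ρ ∈ (0,1) and let ε satisfy βn/(ρ(μ − αn)) < ε < F(x₀) − F*. Then for every natural number K with K ≥ (n/(μ − αn)) · log((F(x₀) − F* − βn/(μ − αn))/(ερ − βn/(μ − αn))), one has ℙ(F(x_K) − F* ≤ ε) ≥ 1 − ρ. -/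
open scoped RealInnerProductSpace
open MeasureTheory

/-!
By the block descent lemma, a step in block `i` lands at a point where `F` is at most
`F(x) + V_i(x, T_i) - Ψ_i(x_i)`, and `V_i(x, T_i)` exceeds the minimum of the model by at most
`δ_i`. Comparing with the model at `x + μ (x* - x)`, where the strong convexity of `f` and `Ψ`
makes the quadratic terms cancel exactly for `μ = (μ_f + μ_Ψ)/(1 + μ_Ψ)`, and averaging over the
uniformly chosen block gives `E[F(x_{k+1}) - F*] ≤ (1 - (μ - αn)/n) E[F(x_k) - F*] + β`. The
average may be taken inside the expectation because `x_k` is a measurable function of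
`I_0, …, I_{k-1}`, hence independent of `I_k`. Unrolling this recursion and applying Markov's
inequality gives the bound.
-/

open ProbabilityTheory

lemma le_add_of_hasDerivAt_le_add_mul {g g' : ℝ → ℝ} {a c : ℝ}
    (hg : ∀ s, HasDerivAt g (g' s) s) (hg' : ∀ s ∈ Set.Ioo (0 : ℝ) 1, g' s ≤ a + c * s) :
    g 1 ≤ g 0 + a + c / 2 := by
  have hφ : ∀ s, HasDerivAt (fun s => g s - a * s - c / 2 * s ^ 2) (g' s - a - c * s) s :=
    fun s => (((hg s).sub ((hasDerivAt_id' s).const_mul a)).sub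
      ((hasDerivAt_pow 2 s).const_mul (c / 2))).congr_deriv (by push_cast; ring)
  obtain ⟨ξ, hξ, hslope⟩ := exists_hasDerivAt_eq_slope _ _ zero_lt_one
    (fun s _ => (hφ s).continuousAt.continuousWithinAt) (fun s _ => hφ s)
  have := hg' ξ hξ
  simp only [sub_zero, div_one] at hslope
  nlinarith

lemma le_pow_mul_add_of_le_mul_add {a : ℕ → ℝ} {r β b : ℝ} (hr : 0 ≤ r) (hb : r * b + β = b)
    (h : ∀ k, a (k + 1) ≤ r * a k + β) (k : ℕ) : a k ≤ r ^ k * (a 0 - b) + b := by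
  induction k with
  | zero => simp
  | succ k ih =>
    calc a (k + 1) ≤ r * (r ^ k * (a 0 - b) + b) + β := (h k).trans (by gcongr)
      _ = r ^ (k + 1) * (a 0 - b) + b := by linear_combination hb

lemma one_sub_pow_mul_le {c A B : ℝ} {K : ℕ} (hc0 : 0 < c) (hc1 : c ≤ 1) (hA : 0 < A)
    (hB : 0 < B) (hK : c⁻¹ * Real.log (A / B) ≤ K) : (1 - c) ^ K * A ≤ B := by
  have hlog : Real.log (A / B) ≤ c * K := by
    rwa [inv_mul_le_iff₀ hc0] at hK
  have hpow : (1 - c) ^ K ≤ Real.exp (-(c * K)) := by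
    calc (1 - c) ^ K ≤ Real.exp (-c) ^ K := by
          gcongr
          linarith [Real.add_one_le_exp (-c)]
      _ = Real.exp (-(c * K)) := by rw [← Real.exp_nat_mul]; ring_nf
  have hexp : Real.exp (-(c * K)) ≤ B / A := by
    rw [Real.exp_neg, inv_le_comm₀ (Real.exp_pos _) (div_pos hB hA), inv_div]
    calc A / B = Real.exp (Real.log (A / B)) := (Real.exp_log (div_pos hA hB)).symm
      _ ≤ Real.exp (c * K) := Real.exp_le_exp.2 hlog
  calc (1 - c) ^ K * A ≤ B / A * A := by gcongr; exact hpow.trans hexp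
    _ = B := div_mul_cancel₀ B hA.ne'

lemma le_of_le_one_sub_mul_add_of_log_le {a : ℕ → ℝ} {c β θ : ℝ} {K : ℕ} (hc0 : 0 < c)
    (hc1 : c ≤ 1) (h : ∀ k, a (k + 1) ≤ (1 - c) * a k + β) (hθ : β / c < θ) (ha0 : θ < a 0)
    (hK : c⁻¹ * Real.log ((a 0 - β / c) / (θ - β / c)) ≤ K) : a K ≤ θ := by
  have hfix : (1 - c) * (β / c) + β = β / c := by field_simp; ring
  have hrec := le_pow_mul_add_of_le_mul_add (by linarith) hfix h K
  have hpow := one_sub_pow_mul_le hc0 hc1 (by linarith) (by linarith) hK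
  linarith

lemma div_one_add_mem_Ioc {a b : ℝ} (hb : 0 ≤ b) (ha : a ≤ 1) (hab : 0 < a + b) :
    (a + b) / (1 + b) ∈ Set.Ioc 0 1 :=
  ⟨by positivity, by rw [div_le_one (by linarith)]; linarith⟩

lemma sub_mul_div_mem_Ioc {n μ α : ℝ} (hn : 1 ≤ n) (hμ : μ ≤ 1) (hα : 0 ≤ α) (hαμ : α < μ / n) :
    (μ - α * n) / n ∈ Set.Ioc 0 1 := by
  have hn0 : 0 < n := by linarith
  rw [lt_div_iff₀ hn0] at hαμ
  exact ⟨div_pos (by linarith) hn0, by rw [div_le_one hn0]; nlinarith⟩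

section RandomIteration

variable {Ω S ι : Type*} {I : ℕ → Ω → ι} {Φ : ℕ → S → ι → S} {X : ℕ → Ω → S} {x₀ : S}

lemma le_of_recursion {V : S → ℝ} (hVΦ : ∀ k x i, V (Φ k x i) ≤ V x) (hX0 : ∀ ω, X 0 ω = x₀)
    (hX : ∀ k ω, X (k + 1) ω = Φ k (X k ω) (I k ω)) (k : ℕ) (ω : Ω) : V (X k ω) ≤ V x₀ := by
  induction k with
  | zero => rw [hX0]
  | succ k ih => exact (hX k ω ▸ hVΦ k _ _).trans ih

variable [MeasurableSpace S] [MeasurableSpace ι]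

lemma exists_measurable_eq_of_recursion (hΦ : ∀ k, Measurable (Function.uncurry (Φ k)))
    (hX0 : ∀ ω, X 0 ω = x₀) (hX : ∀ k ω, X (k + 1) ω = Φ k (X k ω) (I k ω)) (k : ℕ) :
    ∃ Ξ : (Finset.range k → ι) → S, Measurable Ξ ∧ ∀ ω, X k ω = Ξ fun j => I j ω := by
  induction k with
  | zero => exact ⟨fun _ => x₀, measurable_const, hX0⟩
  | succ k ih =>
    obtain ⟨Ξ, hΞm, hΞ⟩ := ih
    have hsub : ∀ j ∈ Finset.range k, j ∈ Finset.range (k + 1) := fun j hj =>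
      Finset.range_subset_range.2 k.le_succ hj
    refine ⟨fun v => Φ k (Ξ fun j => v ⟨j, hsub j j.2⟩) (v ⟨k, Finset.self_mem_range_succ k⟩),
      (hΦ k).comp ((hΞm.comp (measurable_pi_lambda _ fun j => measurable_pi_apply _)).prodMk
        (measurable_pi_apply _)), fun ω => ?_⟩
    rw [hX, hΞ]

variable [MeasurableSpace Ω] {P : Measure Ω}

lemma measurable_of_recursion (hΦ : ∀ k, Measurable (Function.uncurry (Φ k)))
    (hImeas : ∀ k, Measurable (I k)) (hX0 : ∀ ω, X 0 ω = x₀)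
    (hX : ∀ k ω, X (k + 1) ω = Φ k (X k ω) (I k ω)) (k : ℕ) : Measurable (X k) := by
  obtain ⟨Ξ, hΞm, hΞ⟩ := exists_measurable_eq_of_recursion hΦ hX0 hX k
  rw [funext hΞ]
  exact hΞm.comp (measurable_pi_lambda _ fun j => hImeas j)

lemma indepFun_of_recursion (hI : iIndepFun I P) (hImeas : ∀ k, Measurable (I k))
    (hΦ : ∀ k, Measurable (Function.uncurry (Φ k))) (hX0 : ∀ ω, X 0 ω = x₀)
    (hX : ∀ k ω, X (k + 1) ω = Φ k (X k ω) (I k ω)) (k : ℕ) : IndepFun (I k) (X k) P := by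
  obtain ⟨Ξ, hΞm, hΞ⟩ := exists_measurable_eq_of_recursion hΦ hX0 hX k
  have h := (hI.indepFun_finset {k} (Finset.range k) (by simp) hImeas).comp
    (measurable_pi_apply ⟨k, Finset.mem_singleton_self k⟩) hΞm
  rwa [show Ξ ∘ (fun ω (j : Finset.range k) => I j ω) = X k from funext fun ω => (hΞ ω).symm]
    at h

lemma integral_comp_eq_sum_of_indepFun [Fintype ι] [DiscreteMeasurableSpace ι] {J : Ω → ι}
    {Y : Ω → S} (hJY : IndepFun J Y P) (hJ : Measurable J) (hY : Measurable Y)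
    {g : ι → S → ℝ} (hg : ∀ i, Measurable (g i)) (hgY : ∀ i, Integrable (fun ω => g i (Y ω)) P) :
    ∫ ω, g (J ω) (Y ω) ∂P = ∑ i, P.real {ω | J ω = i} * ∫ ω, g i (Y ω) ∂P := by
  classical
  have hsplit : ∀ ω, g (J ω) (Y ω) = ∑ i, ({i} : Set ι).indicator 1 (J ω) * g i (Y ω) :=
    fun ω => by
      rw [Finset.sum_eq_single (J ω) (fun i _ hi => by simp [Ne.symm hi]) (by simp)]
      simp
  have hterm : ∀ i, ∫ ω, ({i} : Set ι).indicator 1 (J ω) * g i (Y ω) ∂P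
      = P.real {ω | J ω = i} * ∫ ω, g i (Y ω) ∂P := fun i => by
    rw [hJY.integral_fun_comp_mul_comp hJ.aemeasurable hY.aemeasurable
      (measurable_of_countable _).aestronglyMeasurable (hg i).aestronglyMeasurable]
    congr 1
    show _ = P.real (J ⁻¹' {i})
    rw [← integral_indicator_one (hJ (measurableSet_singleton i))]
    rfl
  simp_rw [hsplit]
  rw [integral_finsetSum _ fun i _ => ?_]
  · exact Finset.sum_congr rfl fun i _ => hterm i
  · refine (hgY i).bdd_mul (c := 1)
      ((measurable_of_countable (({i} : Set ι).indicator 1)).comp hJ).aestronglyMeasurable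
      (Filter.Eventually.of_forall fun ω => ?_)
    by_cases h : J ω = i <;> simp [h]

lemma integrable_of_recursion [IsFiniteMeasure P] (hΦ : ∀ k, Measurable (Function.uncurry (Φ k)))
    (hImeas : ∀ k, Measurable (I k)) (hX0 : ∀ ω, X 0 ω = x₀)
    (hX : ∀ k ω, X (k + 1) ω = Φ k (X k ω) (I k ω)) {V : S → ℝ} (hV : Measurable V)
    (hV0 : ∀ x, 0 ≤ V x) (hVΦ : ∀ k x i, V (Φ k x i) ≤ V x) (k : ℕ) :
    Integrable (fun ω => V (X k ω)) P :=
  .of_bound (hV.comp (measurable_of_recursion hΦ hImeas hX0 hX k)).aestronglyMeasurable (V x₀)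
    (Filter.Eventually.of_forall fun ω => by
      rw [Real.norm_of_nonneg (hV0 _)]
      exact le_of_recursion hVΦ hX0 hX k ω)

lemma integral_succ_le_of_sum_le [IsProbabilityMeasure P] [Fintype ι] [DiscreteMeasurableSpace ι]
    (hI : iIndepFun I P) (hImeas : ∀ k, Measurable (I k))
    (hΦ : ∀ k, Measurable (Function.uncurry (Φ k))) (hX0 : ∀ ω, X 0 ω = x₀)
    (hX : ∀ k ω, X (k + 1) ω = Φ k (X k ω) (I k ω)) {V : S → ℝ} (hV : Measurable V)
    (hV0 : ∀ x, 0 ≤ V x) (hVΦ : ∀ k x i, V (Φ k x i) ≤ V x) {r β : ℝ}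
    (hstep : ∀ k x, ∑ i, P.real {ω | I k ω = i} * V (Φ k x i) ≤ r * V x + β) (k : ℕ) :
    ∫ ω, V (X (k + 1) ω) ∂P ≤ r * ∫ ω, V (X k ω) ∂P + β := by
  have hXm := measurable_of_recursion hΦ hImeas hX0 hX k
  have hVXk := integrable_of_recursion (P := P) hΦ hImeas hX0 hX hV hV0 hVΦ k
  have hVΦk : ∀ i, Integrable (fun ω => V (Φ k (X k ω) i)) P := fun i =>
    .of_bound ((hV.comp (hΦ k)).comp (hXm.prodMk measurable_const)).aestronglyMeasurable (V x₀)
      (Filter.Eventually.of_forall fun ω => by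
        rw [Real.norm_of_nonneg (hV0 _)]
        exact (hVΦ k _ i).trans (le_of_recursion hVΦ hX0 hX k ω))
  calc ∫ ω, V (X (k + 1) ω) ∂P
      = ∑ i, P.real {ω | I k ω = i} * ∫ ω, V (Φ k (X k ω) i) ∂P := by
        simp_rw [hX]
        exact integral_comp_eq_sum_of_indepFun (g := fun i x => V (Φ k x i))
          (indepFun_of_recursion hI hImeas hΦ hX0 hX k) (hImeas k) hXm
          (fun i => hV.comp ((hΦ k).comp (measurable_id.prodMk measurable_const))) hVΦk
    _ = ∫ ω, ∑ i, P.real {ω | I k ω = i} * V (Φ k (X k ω) i) ∂P := by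
        rw [integral_finsetSum _ fun i _ => (hVΦk i).const_mul _]
        simp_rw [integral_const_mul]
    _ ≤ ∫ ω, (r * V (X k ω) + β) ∂P :=
        integral_mono (integrable_finsetSum _ fun i _ => (hVΦk i).const_mul _)
          ((hVXk.const_mul r).add (integrable_const β)) fun ω => hstep k (X k ω)
    _ = r * ∫ ω, V (X k ω) ∂P + β := by
        rw [integral_add (hVXk.const_mul r) (integrable_const β), integral_const_mul]
        simp

lemma ofReal_one_sub_le_measure_le [IsProbabilityMeasure P] {Y : Ω → ℝ} (hY : Measurable Y)
    (hY0 : ∀ ω, 0 ≤ Y ω) (hYi : Integrable Y P) {ε ρ : ℝ} (hε : 0 < ε) (hρ : 0 ≤ ρ)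
    (h : ∫ ω, Y ω ∂P ≤ ε * ρ) : ENNReal.ofReal (1 - ρ) ≤ P {ω | Y ω ≤ ε} := by
  have htail : P.real {ω | ε ≤ Y ω} ≤ ρ := le_of_mul_le_mul_left
    ((mul_meas_ge_le_integral_of_nonneg (Filter.Eventually.of_forall hY0) hYi ε).trans h) hε
  have hcompl : P {ω | Y ω ≤ ε}ᶜ ≤ ENNReal.ofReal ρ := by
    have hsub : {ω | Y ω ≤ ε}ᶜ ⊆ {ω | ε ≤ Y ω} := by
      intro ω (hω : ¬ Y ω ≤ ε); exact (not_le.1 hω).le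
    refine (measure_mono hsub).trans ?_
    rwa [← ENNReal.ofReal_toReal (measure_ne_top P _), ENNReal.ofReal_le_ofReal_iff hρ]
  rw [← ENNReal.sub_sub_cancel ENNReal.one_ne_top prob_le_one,
    ← prob_compl_eq_one_sub (measurableSet_le hY measurable_const),
    ENNReal.ofReal_sub _ hρ, ENNReal.ofReal_one]
  exact tsub_le_tsub_left hcompl 1

end RandomIteration

section BlockCoordinates

variable {n : ℕ} {E : Fin n → Type*} [∀ i, NormedAddCommGroup (E i)]

lemma blockEmbed_eq_single (i : Fin n) (t : E i) : blockEmbed i t = PiLp.single 2 i t := rfl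

lemma continuous_blockEmbed (i : Fin n) : Continuous (blockEmbed (E := E) i) :=
  (PiLp.continuous_toLp 2 E).comp (continuous_single i)

lemma sum_apply_add_blockEmbed (Ψ : ∀ i, E i → ℝ) (x : PiLp 2 E) (i : Fin n) (t : E i) :
    ∑ j, Ψ j ((x + blockEmbed i t) j) = ∑ j, Ψ j (x j) + (Ψ i (x i + t) - Ψ i (x i)) := by
  rw [← sub_eq_iff_eq_add', ← Finset.sum_sub_distrib,
    Finset.sum_eq_single i (fun j _ hj => by simp [blockEmbed_eq_single, hj]) (by simp)]
  simp [blockEmbed_eq_single]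

lemma continuous_Ffun {f : PiLp 2 E → ℝ} {Ψ : ∀ i, E i → ℝ} (hf : Continuous f)
    (hΨ : ∀ i, Continuous (Ψ i)) : Continuous (Ffun f Ψ) :=
  hf.add (continuous_finsetSum _ fun i _ => (hΨ i).comp (PiLp.continuous_apply 2 E i))

variable [∀ i, InnerProductSpace ℝ (E i)]

lemma blockEmbed_smul (s : ℝ) (i : Fin n) (t : E i) :
    blockEmbed i (s • t) = s • blockEmbed i t := by
  ext j
  by_cases h : j = i
  · subst h; simp [blockEmbed_eq_single]
  · simp [blockEmbed_eq_single, h]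

lemma inner_blockEmbed (y : PiLp 2 E) (i : Fin n) (t : E i) :
    ⟪y, blockEmbed i t⟫ = ⟪y i, t⟫ := by
  rw [PiLp.inner_apply, Finset.sum_eq_single i (fun j _ hj => by simp [blockEmbed_eq_single, hj])
    (by simp)]
  simp [blockEmbed_eq_single]

variable [∀ i, FiniteDimensional ℝ (E i)]

lemma measurable_uncurry_add_blockEmbed [∀ i, MeasurableSpace (E i)] [∀ i, BorelSpace (E i)]
    [MeasurableSpace (PiLp 2 E)] [BorelSpace (PiLp 2 E)] {T : PiLp 2 E → PiLp 2 E}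
    (hT : Measurable T) : Measurable (Function.uncurry fun x i => x + blockEmbed i (T x i)) :=
  measurable_from_prod_countable_left fun i => measurable_id.add
    ((continuous_blockEmbed i).measurable.comp ((PiLp.continuous_apply 2 E i).measurable.comp hT))

def HasBlockLipschitzGradient (f : PiLp 2 E → ℝ) (L : Fin n → ℝ) : Prop :=
  ∀ (x : PiLp 2 E) (i : Fin n) (t : E i),
    ‖(gradient f (x + blockEmbed i t)) i - (gradient f x) i‖ ≤ L i * ‖t‖

variable {f : PiLp 2 E → ℝ} {L : Fin n → ℝ} {Ψ : ∀ i, E i → ℝ}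

lemma hasDerivAt_add_smul_blockEmbed (hf : Differentiable ℝ f) (x : PiLp 2 E) (i : Fin n)
    (t : E i) (s : ℝ) :
    HasDerivAt (fun s : ℝ => f (x + s • blockEmbed i t))
      ⟪(gradient f (x + s • blockEmbed i t)) i, t⟫ s := by
  have hline : HasDerivAt (fun s : ℝ => x + s • blockEmbed i t) (blockEmbed i t) s := by
    simpa using ((hasDerivAt_id s).smul_const (blockEmbed i t)).const_add x
  have := (hf _).hasGradientAt.hasFDerivAt.comp_hasDerivAt s hline
  rwa [InnerProductSpace.toDual_apply_apply, inner_blockEmbed] at this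

lemma block_descent (hf : Differentiable ℝ f) (hLip : HasBlockLipschitzGradient f L)
    (x : PiLp 2 E) (i : Fin n) (t : E i) :
    f (x + blockEmbed i t) ≤ f x + ⟪(gradient f x) i, t⟫ + L i / 2 * ‖t‖ ^ 2 := by
  have h := le_add_of_hasDerivAt_le_add_mul (hasDerivAt_add_smul_blockEmbed hf x i t)
    (a := ⟪(gradient f x) i, t⟫) (c := L i * ‖t‖ ^ 2) fun s hs => by
      have hlip : ‖(gradient f (x + s • blockEmbed i t)) i - (gradient f x) i‖
          ≤ L i * (s * ‖t‖) := by
        simpa [← blockEmbed_smul, norm_smul, abs_of_pos hs.1] using hLip x i (s • t)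
      have hcs := real_inner_le_norm
        ((gradient f (x + s • blockEmbed i t)) i - (gradient f x) i) t
      rw [inner_sub_left] at hcs
      nlinarith [mul_le_mul_of_nonneg_right hlip (norm_nonneg t)]
  simp only [one_smul, zero_smul, add_zero] at h
  linarith

lemma Vi_zero (x : PiLp 2 E) (i : Fin n) : Vi f L Ψ x i 0 = Ψ i (x i) := by
  simp [Vi]

lemma Ffun_add_blockEmbed_le (hf : Differentiable ℝ f) (hLip : HasBlockLipschitzGradient f L)
    (x : PiLp 2 E) (i : Fin n) (t : E i) :
    Ffun f Ψ (x + blockEmbed i t) ≤ Ffun f Ψ x + Vi f L Ψ x i t - Ψ i (x i) := by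
  have := block_descent hf hLip x i t
  simp only [Ffun, Vi, sum_apply_add_blockEmbed]
  linarith

lemma bddBelow_range_Vi_s12 (hf : Differentiable ℝ f) (hLip : HasBlockLipschitzGradient f L)
    {y : PiLp 2 E} (hy : ∀ z, Ffun f Ψ y ≤ Ffun f Ψ z) (x : PiLp 2 E) (i : Fin n) :
    BddBelow (Set.range (Vi f L Ψ x i)) := by
  refine ⟨Ffun f Ψ y - Ffun f Ψ x + Ψ i (x i), ?_⟩
  rintro _ ⟨t, rfl⟩
  linarith [Ffun_add_blockEmbed_le (Ψ := Ψ) hf hLip x i t, hy (x + blockEmbed i t)]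

lemma sum_Vi_smul_sub_le {μf μΨ μ : ℝ}
    (hscf : ∀ x y : PiLp 2 E,
      f x + ⟪gradient f x, y - x⟫ + μf / 2 * ∑ i, L i * ‖y i - x i‖ ^ 2 ≤ f y)
    (hscΨ : ∀ x y : PiLp 2 E, ∀ lam ∈ Set.Icc (0:ℝ) 1,
      ∑ i, Ψ i ((lam • x + (1 - lam) • y) i) ≤
        lam * ∑ i, Ψ i (x i) + (1 - lam) * ∑ i, Ψ i (y i)
          - μΨ * lam * (1 - lam) / 2 * ∑ i, L i * ‖x i - y i‖ ^ 2)
    (hμ : μ * (1 + μΨ) = μf + μΨ) (hμ0 : 0 ≤ μ) (hμ1 : μ ≤ 1) (x y : PiLp 2 E) :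
    ∑ i, Vi f L Ψ x i ((μ • (y - x)) i) ≤ ∑ i, Ψ i (x i) - μ * (Ffun f Ψ x - Ffun f Ψ y) := by
  set Q := ∑ i, L i * ‖y i - x i‖ ^ 2
  have hlin : ∑ i, ⟪(gradient f x) i, (μ • (y - x)) i⟫ ≤ μ * (f y - f x - μf / 2 * Q) := by
    rw [← PiLp.inner_apply, real_inner_smul_right]
    exact mul_le_mul_of_nonneg_left (by linarith [hscf x y]) hμ0
  have hquad : ∑ i, L i / 2 * ‖(μ • (y - x)) i‖ ^ 2 = μ ^ 2 / 2 * Q := by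
    simp only [Q, Finset.mul_sum, PiLp.smul_apply, PiLp.sub_apply, norm_smul, Real.norm_eq_abs,
      mul_pow, sq_abs]
    exact Finset.sum_congr rfl fun i _ => by ring
  have hΨ : ∑ i, Ψ i (x i + (μ • (y - x)) i) ≤
      μ * ∑ i, Ψ i (y i) + (1 - μ) * ∑ i, Ψ i (x i) - μΨ * μ * (1 - μ) / 2 * Q := by
    have hconv : ∀ i, x i + (μ • (y - x)) i = (μ • y + (1 - μ) • x) i := fun i => by
      simp only [PiLp.add_apply, PiLp.smul_apply, PiLp.sub_apply]
      module
    simpa only [hconv] using hscΨ y x μ ⟨hμ0, hμ1⟩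
  have hcoef : (μ ^ 2 / 2 - μ * (μf / 2) - μΨ * μ * (1 - μ) / 2) * Q = 0 := by
    rw [show μ ^ 2 / 2 - μ * (μf / 2) - μΨ * μ * (1 - μ) / 2
      = μ / 2 * (μ * (1 + μΨ) - (μf + μΨ)) by ring, hμ, sub_self, mul_zero, zero_mul]
  simp only [Vi, Finset.sum_add_distrib, Ffun]
  linarith

variable {δ : Fin n → ℝ} {x T : PiLp 2 E}

lemma IsInexactUpdate.Ffun_add_blockEmbed_le (hT : IsInexactUpdate f L Ψ δ x T)
    (hf : Differentiable ℝ f) (hLip : HasBlockLipschitzGradient f L) (i : Fin n) :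
    Ffun f Ψ (x + blockEmbed i (T i)) ≤ Ffun f Ψ x := by
  have := (hT i).trans (min_le_left _ _)
  rw [Vi_zero] at this
  linarith [_root_.Ffun_add_blockEmbed_le (Ψ := Ψ) hf hLip x i (T i)]

lemma IsInexactUpdate.sum_Ffun_add_blockEmbed_sub_le (hT : IsInexactUpdate f L Ψ δ x T)
    (hf : Differentiable ℝ f) (hLip : HasBlockLipschitzGradient f L) {y : PiLp 2 E}
    (hy : ∀ z, Ffun f Ψ y ≤ Ffun f Ψ z) {d : PiLp 2 E} {μ : ℝ}
    (hd : ∑ i, Vi f L Ψ x i (d i) ≤ ∑ i, Ψ i (x i) - μ * (Ffun f Ψ x - Ffun f Ψ y)) :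
    ∑ i, (Ffun f Ψ (x + blockEmbed i (T i)) - Ffun f Ψ y) ≤
      (n - μ) * (Ffun f Ψ x - Ffun f Ψ y) + ∑ i, δ i := by
  have hstep : ∀ i, Ffun f Ψ (x + blockEmbed i (T i)) - Ffun f Ψ y ≤
      (Ffun f Ψ x - Ffun f Ψ y) + δ i + Vi f L Ψ x i (d i) - Ψ i (x i) := fun i => by
    have h1 := (hT i).trans (min_le_right _ _)
    have h2 := ciInf_le (bddBelow_range_Vi_s12 hf hLip hy x i) (d i)
    linarith [_root_.Ffun_add_blockEmbed_le (Ψ := Ψ) hf hLip x i (T i)]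
  calc _ ≤ ∑ i, ((Ffun f Ψ x - Ffun f Ψ y) + δ i + Vi f L Ψ x i (d i) - Ψ i (x i)) :=
        Finset.sum_le_sum fun i _ => hstep i
    _ = n * (Ffun f Ψ x - Ffun f Ψ y) + ∑ i, δ i + ∑ i, Vi f L Ψ x i (d i)
          - ∑ i, Ψ i (x i) := by
        simp only [Finset.sum_sub_distrib, Finset.sum_add_distrib, Finset.sum_const,
          Finset.card_univ, Fintype.card_fin, nsmul_eq_mul]
        ring
    _ ≤ _ := by linarith

lemma IsInexactUpdate.sum_inv_mul_Ffun_add_blockEmbed_sub_le (hn : 0 < n)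
    (hT : IsInexactUpdate f L Ψ δ x T) (hf : Differentiable ℝ f)
    (hLip : HasBlockLipschitzGradient f L) {y : PiLp 2 E} (hy : ∀ z, Ffun f Ψ y ≤ Ffun f Ψ z)
    {d : PiLp 2 E} {μ α β : ℝ}
    (hd : ∑ i, Vi f L Ψ x i (d i) ≤ ∑ i, Ψ i (x i) - μ * (Ffun f Ψ x - Ffun f Ψ y))
    (hδ : 1 / (n : ℝ) * ∑ i, δ i ≤ α * (Ffun f Ψ x - Ffun f Ψ y) + β) :
    ∑ i, (n : ℝ)⁻¹ * (Ffun f Ψ (x + blockEmbed i (T i)) - Ffun f Ψ y) ≤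
      (1 - (μ - α * n) / n) * (Ffun f Ψ x - Ffun f Ψ y) + β := by
  have hn' : (0 : ℝ) < n := Nat.cast_pos.2 hn
  rw [← Finset.mul_sum]
  calc (n : ℝ)⁻¹ * ∑ i, (Ffun f Ψ (x + blockEmbed i (T i)) - Ffun f Ψ y)
      ≤ (n : ℝ)⁻¹ * ((n - μ) * (Ffun f Ψ x - Ffun f Ψ y) + ∑ i, δ i) := by
        gcongr
        exact hT.sum_Ffun_add_blockEmbed_sub_le hf hLip hy hd
    _ = (1 - (μ - α * n) / n) * (Ffun f Ψ x - Ffun f Ψ y)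
          + (1 / n * ∑ i, δ i - α * (Ffun f Ψ x - Ffun f Ψ y)) := by
        field_simp
        ring
    _ ≤ _ := by linarith

theorem icd_strongly_convex_complexity_general
    [∀ i, MeasurableSpace (E i)] [∀ i, BorelSpace (E i)]
    [MeasurableSpace (PiLp 2 E)] [BorelSpace (PiLp 2 E)]
    (hn : 0 < n)
    (L : Fin n → ℝ)
    (f : PiLp 2 E → ℝ) (hfdiff : Differentiable ℝ f)
    (hLip : ∀ (x : PiLp 2 E) (i : Fin n) (t : E i),
      ‖(gradient f (x + blockEmbed i t)) i - (gradient f x) i‖ ≤ L i * ‖t‖)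
    (Ψ : ∀ i, E i → ℝ)
    (hΨcont : ∀ i, Continuous (Ψ i))
    -- strong convexity data
    (μf μΨ : ℝ) (hμf1 : μf ≤ 1) (hμΨ0 : 0 ≤ μΨ) (hμpos : 0 < μf + μΨ)
    (hscf : ∀ x y : PiLp 2 E,
      f x + ⟪gradient f x, y - x⟫ + μf / 2 * ∑ i, L i * ‖y i - x i‖ ^ 2 ≤ f y)
    (hscΨ : ∀ x y : PiLp 2 E, ∀ lam ∈ Set.Icc (0:ℝ) 1,
      ∑ i, Ψ i ((lam • x + (1 - lam) • y) i) ≤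
        lam * ∑ i, Ψ i (x i) + (1 - lam) * ∑ i, Ψ i (y i)
          - μΨ * lam * (1 - lam) / 2 * ∑ i, L i * ‖x i - y i‖ ^ 2)
    (μ : ℝ) (hμdef : μ = (μf + μΨ) / (1 + μΨ))
    -- the minimum of F
    (Fstar : ℝ) (xstar : PiLp 2 E) (hstar : Ffun f Ψ xstar = Fstar)
    (hmin : ∀ y, Fstar ≤ Ffun f Ψ y)
    -- probability space and i.i.d. uniform block selection
    {Ω : Type*} [MeasurableSpace Ω] (Pr : Measure Ω) [IsProbabilityMeasure Pr]
    (I : ℕ → Ω → Fin n) (hImeas : ∀ k, Measurable (I k))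
    (hIindep : iIndepFun I Pr)
    (hIunif : ∀ k i, Pr {ω | I k ω = i} = ((n : ENNReal))⁻¹)
    -- inexactness control
    (α β : ℝ) (hα0 : 0 ≤ α) (hβ0 : 0 ≤ β) (hαμ : α < μ / n)
    (δ : ℕ → PiLp 2 E → Fin n → ℝ)
    (hδbar : ∀ k x, (1 / (n : ℝ)) * ∑ i, δ k x i ≤ α * (Ffun f Ψ x - Fstar) + β)
    -- the inexact update maps
    (T : ℕ → PiLp 2 E → PiLp 2 E) (hTmeas : ∀ k, Measurable (T k))
    (hT : ∀ k x, IsInexactUpdate f L Ψ (δ k x) x (T k x))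
    -- the random iterates
    (x0 : PiLp 2 E) (X : ℕ → Ω → PiLp 2 E) (hX0 : ∀ ω, X 0 ω = x0)
    (hXsucc : ∀ k ω,
      X (k + 1) ω = X k ω + blockEmbed (I k ω) ((T k (X k ω)) (I k ω)))
    -- accuracy and confidence
    (ρ : ℝ) (hρ : ρ ∈ Set.Ioo (0 : ℝ) 1) (ε : ℝ)
    (hεlow : β * n / (ρ * (μ - α * n)) < ε) (hεup : ε < Ffun f Ψ x0 - Fstar)
    (K : ℕ)
    (hK : (n : ℝ) / (μ - α * n) *
        Real.log ((Ffun f Ψ x0 - Fstar - β * n / (μ - α * n)) /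
          (ε * ρ - β * n / (μ - α * n))) ≤ K) :
    ENNReal.ofReal (1 - ρ) ≤ Pr {ω | Ffun f Ψ (X K ω) - Fstar ≤ ε} := by
  obtain ⟨hρ0, hρ1⟩ := hρ
  subst hstar
  obtain ⟨hμ0, hμ1⟩ := hμdef ▸ div_one_add_mem_Ioc hμΨ0 hμf1 hμpos
  have hμ : μ * (1 + μΨ) = μf + μΨ := by rw [hμdef]; field_simp
  obtain ⟨hc0, hc1⟩ := sub_mul_div_mem_Ioc (Nat.one_le_cast.2 hn) hμ1 hα0 hαμ
  have hb : β * n / (μ - α * n) = β / ((μ - α * n) / n) := (div_div_eq_mul_div _ _ _).symm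
  have hθ : β / ((μ - α * n) / n) < ε * ρ := by
    rwa [mul_comm ρ, ← div_div, hb, div_lt_iff₀ hρ0] at hεlow
  have hε0 : 0 < ε := pos_of_mul_pos_left ((div_nonneg hβ0 hc0.le).trans_lt hθ) hρ0.le
  let V : PiLp 2 E → ℝ := fun x => Ffun f Ψ x - Ffun f Ψ xstar
  let Φ : ℕ → PiLp 2 E → Fin n → PiLp 2 E := fun k x i => x + blockEmbed i (T k x i)
  have hΦ : ∀ k, Measurable (Function.uncurry (Φ k)) := fun k =>
    measurable_uncurry_add_blockEmbed (hTmeas k)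
  have hV : Measurable V := (continuous_Ffun hfdiff.continuous hΨcont).measurable.sub_const _
  have hV0 : ∀ x, 0 ≤ V x := fun x => sub_nonneg.2 (hmin x)
  have hVΦ : ∀ k x i, V (Φ k x i) ≤ V x := fun k x i =>
    sub_le_sub_right ((hT k x).Ffun_add_blockEmbed_le hfdiff hLip i) _
  have hstep : ∀ k x, ∑ i, Pr.real {ω | I k ω = i} * V (Φ k x i) ≤
      (1 - (μ - α * n) / n) * V x + β := fun k x => by
    simp only [measureReal_def, hIunif, ENNReal.toReal_inv, ENNReal.toReal_natCast]
    exact (hT k x).sum_inv_mul_Ffun_add_blockEmbed_sub_le hn hfdiff hLip hmin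
      (sum_Vi_smul_sub_le hscf hscΨ hμ hμ0.le hμ1 x xstar) (hδbar k x)
  have hE : ∫ ω, V (X K ω) ∂Pr ≤ ε * ρ := by
    have hX0' : ∫ ω, V (X 0 ω) ∂Pr = V x0 := by simp [hX0]
    refine le_of_le_one_sub_mul_add_of_log_le (a := fun k => ∫ ω, V (X k ω) ∂Pr) hc0 hc1
      (integral_succ_le_of_sum_le (Φ := Φ) hIindep hImeas hΦ hX0 hXsucc hV hV0 hVΦ hstep) hθ
      ?_ ?_ <;> simp only [hX0']
    · linarith [mul_lt_of_lt_one_right hε0 hρ1]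
    · rwa [inv_div, ← hb]
  exact ofReal_one_sub_le_measure_le
    (hV.comp (measurable_of_recursion (Φ := Φ) hΦ hImeas hX0 hXsucc K)) (fun ω => hV0 _)
    (integrable_of_recursion (Φ := Φ) hΦ hImeas hX0 hXsucc hV hV0 hVΦ K) hε0 hρ0.le hE

/-- Iteration complexity of Inexact Coordinate Descent for a strongly convex composite
objective with uniform block-selection probabilities: with high probability `1 − ρ`,
after `K ≥ (n/(μ − αn))·log((F(x₀) − F* − βn/(μ − αn))/(ερ − βn/(μ − αn)))` iterations the
residual is at most `ε`. -/
theorem icd_strongly_convex_complexity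
    [∀ i, MeasurableSpace (E i)] [∀ i, BorelSpace (E i)]
    [MeasurableSpace (PiLp 2 E)] [BorelSpace (PiLp 2 E)]
    (hn : 0 < n)
    (L : Fin n → ℝ) (hL : ∀ i, 0 < L i)
    (f : PiLp 2 E → ℝ) (hfdiff : Differentiable ℝ f) (hfconv : ConvexOn ℝ Set.univ f)
    (hLip : ∀ (x : PiLp 2 E) (i : Fin n) (t : E i),
      ‖(gradient f (x + blockEmbed i t)) i - (gradient f x) i‖ ≤ L i * ‖t‖)
    (Ψ : ∀ i, E i → ℝ) (hΨconv : ∀ i, ConvexOn ℝ Set.univ (Ψ i))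
    (hΨcont : ∀ i, Continuous (Ψ i))
    -- strong convexity data
    (μf μΨ : ℝ) (hμf0 : 0 ≤ μf) (hμf1 : μf ≤ 1) (hμΨ0 : 0 ≤ μΨ) (hμpos : 0 < μf + μΨ)
    (hscf : ∀ x y : PiLp 2 E,
      f x + ⟪gradient f x, y - x⟫ + μf / 2 * ∑ i, L i * ‖y i - x i‖ ^ 2 ≤ f y)
    (hscΨ : ∀ x y : PiLp 2 E, ∀ lam ∈ Set.Icc (0:ℝ) 1,
      ∑ i, Ψ i ((lam • x + (1 - lam) • y) i) ≤
        lam * ∑ i, Ψ i (x i) + (1 - lam) * ∑ i, Ψ i (y i)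
          - μΨ * lam * (1 - lam) / 2 * ∑ i, L i * ‖x i - y i‖ ^ 2)
    (μ : ℝ) (hμdef : μ = (μf + μΨ) / (1 + μΨ))
    -- the minimum of F
    (Fstar : ℝ) (xstar : PiLp 2 E) (hstar : Ffun f Ψ xstar = Fstar)
    (hmin : ∀ y, Fstar ≤ Ffun f Ψ y)
    -- probability space and i.i.d. uniform block selection
    {Ω : Type*} [MeasurableSpace Ω] (Pr : Measure Ω) [IsProbabilityMeasure Pr]
    (I : ℕ → Ω → Fin n) (hImeas : ∀ k, Measurable (I k))
    (hIindep : iIndepFun I Pr)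
    (hIunif : ∀ k i, Pr {ω | I k ω = i} = ((n : ENNReal))⁻¹)
    -- inexactness control
    (α β : ℝ) (hα0 : 0 ≤ α) (hβ0 : 0 ≤ β) (hαμ : α < μ / n)
    (δ : ℕ → PiLp 2 E → Fin n → ℝ) (hδmeas : ∀ k, Measurable (δ k))
    (hδ0 : ∀ k x i, 0 ≤ δ k x i)
    (hδbar : ∀ k x, (1 / (n : ℝ)) * ∑ i, δ k x i ≤ α * (Ffun f Ψ x - Fstar) + β)
    -- the inexact update maps
    (T : ℕ → PiLp 2 E → PiLp 2 E) (hTmeas : ∀ k, Measurable (T k))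
    (hT : ∀ k x, IsInexactUpdate f L Ψ (δ k x) x (T k x))
    -- the random iterates
    (x0 : PiLp 2 E) (X : ℕ → Ω → PiLp 2 E) (hX0 : ∀ ω, X 0 ω = x0)
    (hXsucc : ∀ k ω,
      X (k + 1) ω = X k ω + blockEmbed (I k ω) ((T k (X k ω)) (I k ω)))
    -- accuracy and confidence
    (ρ : ℝ) (hρ : ρ ∈ Set.Ioo (0 : ℝ) 1) (ε : ℝ)
    (hεlow : β * n / (ρ * (μ - α * n)) < ε) (hεup : ε < Ffun f Ψ x0 - Fstar)
    (K : ℕ)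
    (hK : (n : ℝ) / (μ - α * n) *
        Real.log ((Ffun f Ψ x0 - Fstar - β * n / (μ - α * n)) /
          (ε * ρ - β * n / (μ - α * n))) ≤ K) :
    ENNReal.ofReal (1 - ρ) ≤ Pr {ω | Ffun f Ψ (X K ω) - Fstar ≤ ε} :=
  icd_strongly_convex_complexity_general hn L f hfdiff hLip Ψ hΨcont μf μΨ hμf1 hμΨ0 hμpos hscf hscΨ
    μ hμdef Fstar xstar hstar hmin Pr I hImeas hIindep hIunif α β hα0 hβ0 hαμ δ hδbar T hTmeas hT x0
    X hX0 hXsucc ρ hρ ε hεlow hεup K hK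

end BlockCoordinates
end
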